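/- For α ∈ (1/2, 1) and κ > 0, the equation φ(y) = 2α·y·(1 - Φ(y)) has a solution y* in (0, ȳ] where ȳ = (2α - 1)^{-1/2}; moreover the function y ↦ φ(y) - 2αy(1-Φ(y)) is positive at y = 0 and nonpositive at y = ȳ. -/

import Mathlib

noncomputable def phi (x : ℝ) : ℝ := (Real.sqrt (2 * Real.pi))⁻¹ * Real.exp (-x ^ 2 / 2)

noncomputable def Phi (x : ℝ) : ℝ := ∫ t in Set.Iic x, phi t

/-!
By the intermediate value theorem it is enough to compare signs at `0` and at `ȳ`. At `0` the
function is `φ 0 > 0`. Since `2α ȳ = ȳ + ȳ⁻¹`, the sign at `ȳ` is Gordon's lower bound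
`y φ(y) / (1 + y²) ≤ 1 - Φ(y)`: the difference of the two sides has derivative
`-2 φ(y) / (1 + y²)²`, so it is antitone, and it tends to `0` at infinity.
-/

open Real MeasureTheory Filter Set Topology ProbabilityTheory

lemma phi_eq_gaussianPDFReal : phi = gaussianPDFReal 0 1 := by
  ext x; simp [phi, gaussianPDFReal]

lemma phi_pos (x : ℝ) : 0 < phi x := by
  rw [phi_eq_gaussianPDFReal]; exact gaussianPDFReal_pos _ _ _ one_ne_zero

@[fun_prop]
lemma continuous_phi : Continuous phi := by
  unfold phi; fun_prop

lemma integrable_phi : Integrable phi := by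
  rw [phi_eq_gaussianPDFReal]; exact integrable_gaussianPDFReal _ _

lemma integral_phi : ∫ x, phi x = 1 := by
  rw [phi_eq_gaussianPDFReal]; exact integral_gaussianPDFReal_eq_one _ one_ne_zero

lemma hasDerivAt_phi (x : ℝ) : HasDerivAt phi (-(x * phi x)) x := by
  have h : HasDerivAt (fun x : ℝ => -x ^ 2 / 2) (-x) x :=
    ((hasDerivAt_pow 2 x).fun_neg.div_const 2).congr_deriv (by push_cast; ring)
  refine (h.exp.const_mul (√(2 * π))⁻¹).congr_deriv ?_
  unfold phi; ring

lemma tendsto_phi_atTop : Tendsto phi atTop (𝓝 0) := by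
  have h : Tendsto (fun x : ℝ => -x ^ 2 / 2) atTop atBot :=
    (tendsto_neg_atTop_atBot.comp (tendsto_pow_atTop two_ne_zero)).atBot_div_const two_pos
  have h' := (tendsto_exp_atBot.comp h).const_mul (√(2 * π))⁻¹
  rw [mul_zero] at h'
  exact h'

lemma hasDerivAt_Phi (x : ℝ) : HasDerivAt Phi (phi x) x := by
  have hPhi : ∀ y, Phi y = Phi 0 + ∫ t in (0 : ℝ)..y, phi t := fun y => by
    rw [Phi, Phi, ← intervalIntegral.integral_Iic_sub_Iic integrable_phi.integrableOn
      integrable_phi.integrableOn]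
    ring
  rw [funext hPhi]
  exact (intervalIntegral.integral_hasDerivAt_right (continuous_phi.intervalIntegrable _ _)
    (continuous_phi.stronglyMeasurableAtFilter _ _) continuous_phi.continuousAt).const_add _

@[fun_prop]
lemma continuous_Phi : Continuous Phi :=
  continuous_iff_continuousAt.2 fun x => (hasDerivAt_Phi x).continuousAt

lemma tendsto_Phi_atTop : Tendsto Phi atTop (𝓝 1) := by
  have h := tendsto_setIntegral_of_monotone (μ := volume) (f := phi) (s := Iic)
    (fun _ => measurableSet_Iic) (fun _ _ => Iic_subset_Iic.2) integrable_phi.integrableOn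
  rwa [iUnion_Iic, setIntegral_univ, integral_phi] at h

noncomputable def gordonGap (y : ℝ) : ℝ := 1 - Phi y - y * phi y / (1 + y ^ 2)

lemma hasDerivAt_gordonGap (y : ℝ) :
    HasDerivAt gordonGap (-(2 * phi y / (1 + y ^ 2) ^ 2)) y := by
  have hq := ((hasDerivAt_id y).mul (hasDerivAt_phi y)).div
    ((hasDerivAt_pow 2 y).const_add 1) (by positivity : (1 + y ^ 2) ≠ 0)
  refine (((hasDerivAt_Phi y).const_sub 1).sub hq).congr_deriv ?_
  simp only [id, Pi.mul_apply]
  field_simp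
  ring

lemma antitone_gordonGap : Antitone gordonGap :=
  antitone_of_hasDerivAt_nonpos hasDerivAt_gordonGap fun y => by
    have := phi_pos y
    exact neg_nonpos.2 (by positivity)

lemma tendsto_gordonGap_atTop : Tendsto gordonGap atTop (𝓝 0) := by
  have hq : Tendsto (fun y : ℝ => y * phi y / (1 + y ^ 2)) atTop (𝓝 0) := by
    refine tendsto_of_tendsto_of_tendsto_of_le_of_le' tendsto_const_nhds tendsto_phi_atTop ?_ ?_
    all_goals filter_upwards [eventually_ge_atTop 0] with y hy
    · have := phi_pos y; positivity
    · rw [div_le_iff₀ (by positivity)]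
      nlinarith [phi_pos y, sq_nonneg (y - 1)]
  have h := (tendsto_Phi_atTop.const_sub 1).sub hq
  rw [sub_self, sub_zero] at h
  exact h

lemma gordonGap_nonneg (y : ℝ) : 0 ≤ gordonGap y :=
  le_of_tendsto tendsto_gordonGap_atTop
    ((eventually_ge_atTop y).mono fun _ h => antitone_gordonGap h)

lemma mul_phi_div_le_one_sub_Phi (y : ℝ) : y * phi y / (1 + y ^ 2) ≤ 1 - Phi y :=
  sub_nonneg.1 (gordonGap_nonneg y)

lemma phi_le_add_inv_mul_one_sub_Phi {y : ℝ} (hy : 0 < y) :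
    phi y ≤ (y + y⁻¹) * (1 - Phi y) :=
  calc phi y = (y + y⁻¹) * (y * phi y / (1 + y ^ 2)) := by field_simp; ring
    _ ≤ (y + y⁻¹) * (1 - Phi y) := by gcongr; exact mul_phi_div_le_one_sub_Phi y

theorem optimality_equation_solution_general (α : ℝ) (hα : α ∈ Set.Ioo (1/2 : ℝ) 1) :
    (∃ y ∈ Set.Ioc (0 : ℝ) (1 / Real.sqrt (2 * α - 1)),
        phi y = 2 * α * y * (1 - Phi y)) ∧
      0 < phi 0 - 2 * α * 0 * (1 - Phi 0) ∧
      phi (1 / Real.sqrt (2 * α - 1))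
          - 2 * α * (1 / Real.sqrt (2 * α - 1))
            * (1 - Phi (1 / Real.sqrt (2 * α - 1))) ≤ 0 := by
  have h2α : 0 < 2 * α - 1 := by linarith [hα.1]
  generalize hc : 1 / √(2 * α - 1) = c
  have hc_pos : 0 < c := hc ▸ by positivity
  have hc_add_inv : 2 * α * c = c + c⁻¹ := by
    have hc_sq : c ^ 2 = (2 * α - 1)⁻¹ := by
      rw [← hc, div_pow, sq_sqrt h2α.le, one_pow, one_div]
    field_simp
    rw [hc_sq]
    field_simp
    ring
  set f : ℝ → ℝ := fun y => phi y - 2 * α * y * (1 - Phi y)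
  have hf0 : 0 < f 0 := by simpa [f] using phi_pos 0
  have hfc : f c ≤ 0 := by
    simp only [f, hc_add_inv]
    linarith [phi_le_add_inv_mul_one_sub_Phi hc_pos]
  have hf_cont : Continuous f := by fun_prop
  obtain ⟨y, hy, hfy⟩ := intermediate_value_Ioc' hc_pos.le hf_cont.continuousOn ⟨hfc, hf0⟩
  exact ⟨⟨y, hy, sub_eq_zero.1 hfy⟩, hf0, hfc⟩

/-- For `α ∈ (1/2, 1)`, the equation `φ(y) = 2α y (1 - Φ(y))` has a solution
`y* ∈ (0, ȳ]` with `ȳ = (2α - 1)^{-1/2}`; moreover `y ↦ φ(y) - 2α y (1 - Φ(y))`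
is positive at `0` and nonpositive at `ȳ`. -/
theorem optimality_equation_solution (α κ : ℝ) (hα : α ∈ Set.Ioo (1/2 : ℝ) 1)
    (hκ : 0 < κ) :
    (∃ y ∈ Set.Ioc (0 : ℝ) (1 / Real.sqrt (2 * α - 1)),
        phi y = 2 * α * y * (1 - Phi y)) ∧
      0 < phi 0 - 2 * α * 0 * (1 - Phi 0) ∧
      phi (1 / Real.sqrt (2 * α - 1))
          - 2 * α * (1 / Real.sqrt (2 * α - 1))
            * (1 - Phi (1 / Real.sqrt (2 * α - 1))) ≤ 0 :=
  optimality_equation_solution_general α hα
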